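/- Let 0 < p < ∞, α ∈ ℝ, r > 0 and f ∈ L²_loc(ℂ, dA). Then ‖ρ^α · MO_{2,r}(f)‖_{L^p(ℂ,dA)} < ∞ if and only if there exists a continuous function c : ℂ → ℂ such that the function z ↦ ρ(z)^α · (|D^r(z)|^{-1} ∫_{D^r(z)} |f(w) − c(z)|² dA(w))^{1/2} belongs to L^p(ℂ, dA). -/

import Mathlib

/-!
For the forward direction take `c = f̂_r`. It is continuous: a nonzero doubling measure charges
every ball, so `s ↦ μ(D(z, s))` is strictly increasing and `ρ` is `1`-Lipschitz, and the integral
of a locally integrable function over `D(z, R(z))` is continuous in `z` for continuous `R`, by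
dominated convergence, since spheres are Lebesgue-null.

Conversely, for any constant `c` and the normalized measure `ν` on `D^r(z)`,
`|c − f̂_r(z)| ≤ ‖f − c‖_{L¹(ν)} ≤ ‖f − c‖_{L²(ν)}`, so the triangle inequality gives
`MO_{2,r}(f)(z) ≤ 2 ‖f − c‖_{L²(ν)}` pointwise, whatever `c(z)` is.
-/

open MeasureTheory Metric Complex ENNReal Set

noncomputable section

/-- The Laplacian `Δφ = ∂²φ/∂x² + ∂²φ/∂y²`. -/
def lapl (φ : ℂ → ℝ) (z : ℂ) : ℝ :=
  fderiv ℝ (fun w => fderiv ℝ φ w 1) z 1 + fderiv ℝ (fun w => fderiv ℝ φ w Complex.I) z Complex.I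

/-- The measure `μ = Δφ · dA`. -/
def muOf (φ : ℂ → ℝ) : Measure ℂ :=
  MeasureTheory.volume.withDensity fun z => ENNReal.ofReal (lapl φ z)

/-- `(|D^r(z)|⁻¹ ∫_{D^r(z)} |g|^q dA)^{1/q}`, valued in `ℝ≥0∞`, where `D^r(z) = D(z, r·ρ(z))`. -/
def avgq (ρ : ℂ → ℝ) (q r : ℝ) (g : ℂ → ℂ) (z : ℂ) : ℝ≥0∞ :=
  ((∫⁻ w in ball z (r * ρ z), ENNReal.ofReal (‖g w‖ ^ q)) / volume (ball z (r * ρ z))) ^ (1 / q)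

/-- `G_{q,r}(f)(z)`: the integral distance to holomorphic functions on `D^r(z)`. -/
def Gqr (ρ : ℂ → ℝ) (q r : ℝ) (f : ℂ → ℂ) (z : ℂ) : ℝ≥0∞ :=
  ⨅ (h : ℂ → ℂ) (_ : DifferentiableOn ℂ h (ball z (r * ρ z))),
    avgq ρ q r (fun w => f w - h w) z

/-- The `L^p(ℂ, dA)`-norm (`0 < p < ∞`) of an `ℝ≥0∞`-valued function. -/
def lpN (p : ℝ) (g : ℂ → ℝ≥0∞) : ℝ≥0∞ := (∫⁻ z, g z ^ p) ^ (1 / p)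

/-- The mean `f̂_r(z) = |D^r(z)|⁻¹ ∫_{D^r(z)} f dA`. -/
def avgC (ρ : ℂ → ℝ) (r : ℝ) (f : ℂ → ℂ) (z : ℂ) : ℂ :=
  ((volume (ball z (r * ρ z))).toReal)⁻¹ • ∫ w in ball z (r * ρ z), f w

/-- `MO_{2,r}(f)(z) = (|D^r(z)|⁻¹ ∫_{D^r(z)} |f − f̂_r(z)|² dA)^{1/2}`. -/
def MO2 (ρ : ℂ → ℝ) (r : ℝ) (f : ℂ → ℂ) (z : ℂ) : ℝ≥0∞ :=
  avgq ρ 2 r (fun w => f w - avgC ρ r f z) z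

open Topology ProbabilityTheory

theorem eLpNorm_sub_integral_le {α E : Type*} [MeasurableSpace α] [NormedAddCommGroup E]
    [NormedSpace ℝ E] [CompleteSpace E] {ν : Measure α} [IsProbabilityMeasure ν] {f : α → E}
    (hf : Integrable f ν) (c : E) :
    eLpNorm (fun x => f x - ∫ y, f y ∂ν) 2 ν ≤ 2 * eLpNorm (fun x => f x - c) 2 ν := by
  have hfc : AEStronglyMeasurable (fun x => f x - c) ν :=
    hf.aestronglyMeasurable.sub aestronglyMeasurable_const
  have hmean : ‖c - ∫ y, f y ∂ν‖ₑ ≤ eLpNorm (fun x => f x - c) 2 ν :=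
    calc ‖c - ∫ y, f y ∂ν‖ₑ = ‖∫ y, (c - f y) ∂ν‖ₑ := by
          rw [integral_sub (integrable_const c) hf, integral_const, probReal_univ, one_smul]
      _ ≤ eLpNorm (fun y => c - f y) 1 ν :=
          (enorm_integral_le_lintegral_enorm _).trans_eq eLpNorm_one_eq_lintegral_enorm.symm
      _ = eLpNorm (fun x => f x - c) 1 ν := eLpNorm_sub_comm _ _ _ _
      _ ≤ eLpNorm (fun x => f x - c) 2 ν := eLpNorm_le_eLpNorm_of_exponent_le one_le_two hfc
  calc eLpNorm (fun x => f x - ∫ y, f y ∂ν) 2 ν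
      = eLpNorm ((fun x => f x - c) + fun _ => c - ∫ y, f y ∂ν) 2 ν := by
        congr 1; ext x; simp
    _ ≤ eLpNorm (fun x => f x - c) 2 ν + eLpNorm (fun _ => c - ∫ y, f y ∂ν) 2 ν :=
        eLpNorm_add_le hfc aestronglyMeasurable_const one_le_two
    _ ≤ 2 * eLpNorm (fun x => f x - c) 2 ν := by
        rw [eLpNorm_const _ two_ne_zero (IsProbabilityMeasure.ne_zero ν), measure_univ,
          ENNReal.one_rpow, mul_one, two_mul]
        gcongr

theorem measure_ball_pos_of_doubling {X : Type*} [PseudoMetricSpace X] [MeasurableSpace X]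
    {μ : Measure X} (hμ : μ ≠ 0) {C : ℝ≥0∞}
    (hdbl : ∀ (z : X) (s : ℝ), 0 < s → μ (ball z (2 * s)) ≤ C * μ (ball z s))
    (z : X) {s : ℝ} (hs : 0 < s) : 0 < μ (ball z s) := by
  refine pos_iff_ne_zero.2 fun h0 => hμ ?_
  have hn : ∀ n : ℕ, μ (ball z (2 ^ n * s)) = 0 := by
    intro n
    induction n with
    | zero => simpa using h0
    | succ k ih =>
      rw [pow_succ', mul_assoc]
      exact le_antisymm ((hdbl z _ (by positivity)).trans (by rw [ih, mul_zero])) zero_le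
  have hcover : (univ : Set X) ⊆ ⋃ n : ℕ, ball z (2 ^ n * s) := by
    intro w _
    obtain ⟨n, hn⟩ := pow_unbounded_of_one_lt (dist w z / s) one_lt_two
    exact mem_iUnion.2 ⟨n, mem_ball.2 ((div_lt_iff₀ hs).1 hn)⟩
  exact Measure.measure_univ_eq_zero.1 (measure_mono_null hcover (measure_iUnion_null hn))

section Radius

variable {E : Type*} [NormedAddCommGroup E] [NormedSpace ℝ E] [Nontrivial E] [MeasurableSpace E]
  [OpensMeasurableSpace E] {μ : Measure E}

theorem measure_ball_lt_measure_ball (hpos : ∀ (z : E) (s : ℝ), 0 < s → 0 < μ (ball z s))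
    (z : E) {a b : ℝ} (ha : 0 ≤ a) (hab : a < b) (hfin : μ (ball z a) ≠ ⊤) :
    μ (ball z a) < μ (ball z b) := by
  obtain ⟨v, hv⟩ := exists_norm_eq E (by linarith : 0 ≤ (a + b) / 2)
  have hdist : dist z (z + v) = (a + b) / 2 := by rw [dist_self_add_right, hv]
  have hdisj : Disjoint (ball z a) (ball (z + v) ((b - a) / 2)) :=
    ball_disjoint_ball (by linarith)
  have hsub : ball z a ∪ ball (z + v) ((b - a) / 2) ⊆ ball z b :=
    union_subset (ball_subset_ball hab.le) (ball_subset_ball' (by rw [dist_comm]; linarith))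
  calc μ (ball z a) < μ (ball z a) + μ (ball (z + v) ((b - a) / 2)) :=
        ENNReal.lt_add_right hfin (hpos _ _ (by linarith)).ne'
    _ = μ (ball z a ∪ ball (z + v) ((b - a) / 2)) := (measure_union hdisj measurableSet_ball).symm
    _ ≤ μ (ball z b) := measure_mono hsub

theorem lipschitzWith_one_of_measure_ball_eq_one
    (hpos : ∀ (z : E) (s : ℝ), 0 < s → 0 < μ (ball z s))
    {ρ : E → ℝ} (hρ : ∀ z, 0 < ρ z ∧ μ (ball z (ρ z)) = 1) : LipschitzWith 1 ρ := by
  refine LipschitzWith.of_le_add fun z z' => ?_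
  by_contra! h
  have hfin : μ (ball z (ρ z' + dist z z')) ≠ ⊤ :=
    ne_top_of_le_ne_top one_ne_top ((measure_mono (ball_subset_ball h.le)).trans (hρ z).2.le)
  have hcontra : (1 : ℝ≥0∞) < 1 :=
    calc (1 : ℝ≥0∞) = μ (ball z' (ρ z')) := (hρ z').2.symm
      _ ≤ μ (ball z (ρ z' + dist z z')) := measure_mono (ball_subset_ball' (by rw [dist_comm]))
      _ < μ (ball z (ρ z)) :=
        measure_ball_lt_measure_ball hpos z (add_nonneg (hρ z').1.le dist_nonneg) h hfin
      _ = 1 := (hρ z).2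
  exact hcontra.false

end Radius

theorem integrableOn_of_lintegral_sq_lt_top {α F : Type*} [MeasurableSpace α]
    [NormedAddCommGroup F] {μ : Measure α} {s : Set α} (hs : μ s ≠ ⊤) {f : α → F}
    (hf : AEStronglyMeasurable f (μ.restrict s))
    (hsq : ∫⁻ x in s, ENNReal.ofReal (‖f x‖ ^ (2 : ℝ)) ∂μ < ⊤) : IntegrableOn f s μ := by
  have : Fact (μ s < ⊤) := ⟨hs.lt_top⟩
  refine (memLp_two_iff_integrable_sq_norm hf).2 ⟨hf.norm.pow 2, ?_⟩ |>.integrable one_le_two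
  rw [hasFiniteIntegral_iff_ofReal (.of_forall fun x => by positivity)]
  simpa only [Real.rpow_two] using hsq

theorem MeasureTheory.LocallyIntegrable.integrableOn_ball {X F : Type*} [PseudoMetricSpace X]
    [ProperSpace X] [MeasurableSpace X] [NormedAddCommGroup F] {μ : Measure X} {f : X → F}
    (hf : LocallyIntegrable f μ) (z : X) (s : ℝ) : IntegrableOn f (ball z s) μ :=
  (hf.integrableOn_isCompact (isCompact_closedBall z s)).mono_set ball_subset_closedBall

theorem eventually_mem_ball_iff {X : Type*} [PseudoMetricSpace X] {R : X → ℝ} (hR : Continuous R)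
    {z₀ w : X} (hw : w ∉ sphere z₀ (R z₀)) :
    ∀ᶠ z in 𝓝 z₀, (w ∈ ball z (R z) ↔ w ∈ ball z₀ (R z₀)) := by
  have hd : Continuous fun z => dist w z := continuous_const.dist continuous_id
  rcases (show dist w z₀ ≠ R z₀ from hw).lt_or_gt with h | h
  · filter_upwards [hd.continuousAt.eventually_lt hR.continuousAt h] with z hz
    simp only [mem_ball, hz, h]
  · filter_upwards [hR.continuousAt.eventually_lt hd.continuousAt h] with z hz
    simp only [mem_ball, hz.not_gt, h.not_gt]

theorem continuous_setIntegral_ball {E F : Type*} [NormedAddCommGroup E] [NormedSpace ℝ E]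
    [FiniteDimensional ℝ E] [Nontrivial E] [MeasurableSpace E] [BorelSpace E] {μ : Measure E}
    [μ.IsAddHaarMeasure] [NormedAddCommGroup F] [NormedSpace ℝ F] {f : E → F}
    (hf : LocallyIntegrable f μ) {R : E → ℝ} (hR : Continuous R) :
    Continuous fun z => ∫ w in ball z (R z), f w ∂μ := by
  refine continuous_iff_continuousAt.2 fun z₀ => ?_
  simp_rw [← integral_indicator measurableSet_ball]
  set B := ball z₀ (R z₀ + 2)
  have hsub : ∀ᶠ z in 𝓝 z₀, ball z (R z) ⊆ B := by
    filter_upwards [ball_mem_nhds z₀ one_pos,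
      hR.continuousAt.eventually_lt continuousAt_const (lt_add_one (R z₀))] with z hz hRz
    exact ball_subset_ball' (by rw [mem_ball] at hz; linarith)
  refine continuousAt_of_dominated (bound := fun w => ‖B.indicator f w‖)
    (.of_forall fun z => hf.aestronglyMeasurable.indicator measurableSet_ball) ?_ ?_ ?_
  · filter_upwards [hsub] with z hz
    exact .of_forall fun w => norm_indicator_le_of_subset hz f w
  · exact ((integrable_indicator_iff measurableSet_ball).2 (hf.integrableOn_ball _ _)).norm
  · filter_upwards [measure_eq_zero_iff_ae_notMem.1 (Measure.addHaar_sphere μ z₀ (R z₀))] with w hw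
    exact tendsto_const_nhds.congr'
      ((eventually_mem_ball_iff hR hw).mono fun z hz => indicator_eq_indicator hz.symm rfl)

theorem avgq_two_eq_eLpNorm_cond (ρ : ℂ → ℝ) (r : ℝ) (g : ℂ → ℂ) (z : ℂ) :
    avgq ρ 2 r g z = eLpNorm g 2 (volume[|ball z (r * ρ z)]) := by
  rw [avgq, eLpNorm_eq_lintegral_rpow_enorm_toReal two_ne_zero ofNat_ne_top, ProbabilityTheory.cond,
    lintegral_smul_measure, ENNReal.div_eq_inv_mul, ENNReal.toReal_ofNat]
  congr 3
  ext w
  rw [← ofReal_norm, ENNReal.ofReal_rpow_of_nonneg (norm_nonneg _) zero_le_two]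

theorem avgC_eq_integral_cond (ρ : ℂ → ℝ) (r : ℝ) (f : ℂ → ℂ) (z : ℂ) :
    avgC ρ r f z = ∫ w, f w ∂(volume[|ball z (r * ρ z)]) := by
  rw [avgC, ProbabilityTheory.cond, integral_smul_measure, ENNReal.toReal_inv]

theorem MO2_le_two_mul_avgq {ρ : ℂ → ℝ} {r : ℝ} {f : ℂ → ℂ} {z : ℂ} (hrz : 0 < r * ρ z)
    (hf : IntegrableOn f (ball z (r * ρ z))) (c : ℂ) :
    MO2 ρ r f z ≤ 2 * avgq ρ 2 r (fun w => f w - c) z := by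
  have hB : volume (ball z (r * ρ z)) ≠ 0 := (measure_ball_pos volume z hrz).ne'
  have := cond_isProbabilityMeasure_of_finite hB measure_ball_lt_top.ne
  rw [MO2, avgq_two_eq_eLpNorm_cond, avgq_two_eq_eLpNorm_cond, avgC_eq_integral_cond]
  exact eLpNorm_sub_integral_le (ν := volume[|ball z (r * ρ z)])
    (hf.smul_measure (ENNReal.inv_ne_top.2 hB)) c

theorem continuous_avgC {ρ : ℂ → ℝ} {r : ℝ} (hr : 0 < r) (hρ : Continuous ρ)
    (hρpos : ∀ z, 0 < ρ z) {f : ℂ → ℂ} (hf : LocallyIntegrable f volume) :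
    Continuous (avgC ρ r f) := by
  have hR : Continuous fun z => r * ρ z := continuous_const.mul hρ
  have hvol : ∀ z, (volume (ball z (r * ρ z))).toReal = (r * ρ z) ^ 2 * Real.pi := fun z => by
    rw [Complex.volume_ball, toReal_mul, toReal_pow, toReal_ofReal (mul_pos hr (hρpos z)).le,
      coe_toReal, NNReal.coe_real_pi]
  have hinv : Continuous fun z => (volume (ball z (r * ρ z))).toReal⁻¹ := by
    simp_rw [hvol]
    exact ((hR.pow 2).mul continuous_const).inv₀ fun z =>
      (mul_pos (pow_pos (mul_pos hr (hρpos z)) 2) Real.pi_pos).ne'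
  exact hinv.smul (continuous_setIntegral_ball hf hR)

theorem lpN_mono {p : ℝ} (hp : 0 ≤ p) {g h : ℂ → ℝ≥0∞} (hgh : ∀ z, g z ≤ h z) :
    lpN p g ≤ lpN p h :=
  ENNReal.rpow_le_rpow (lintegral_mono fun z => ENNReal.rpow_le_rpow (hgh z) hp) (by positivity)

theorem lpN_const_mul {p : ℝ} (hp : 0 < p) {a : ℝ≥0∞} (ha : a ≠ ⊤) (g : ℂ → ℝ≥0∞) :
    lpN p (fun z => a * g z) = a * lpN p g := by
  simp_rw [lpN, ENNReal.mul_rpow_of_nonneg _ _ hp.le]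
  rw [lintegral_const_mul' _ _ (ENNReal.rpow_ne_top_of_nonneg hp.le ha),
    ENNReal.mul_rpow_of_nonneg _ _ (by positivity), ← ENNReal.rpow_mul, mul_one_div_cancel hp.ne',
    ENNReal.rpow_one]

theorem stmt8_general (p α r : ℝ) (hp : 0 < p) (hr : 0 < r)
    (φ : ℂ → ℝ) (hne : muOf φ ≠ 0) (C₀ : ℝ≥0∞)
    (hdbl : ∀ (z : ℂ) (s : ℝ), 0 < s → muOf φ (ball z (2 * s)) ≤ C₀ * muOf φ (ball z s))
    (ρ : ℂ → ℝ) (hρ : ∀ z, 0 < ρ z ∧ muOf φ (ball z (ρ z)) = 1)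
    (f : ℂ → ℂ) (hfm : AEStronglyMeasurable f MeasureTheory.volume)
    (hfl : ∀ (z : ℂ) (s : ℝ), 0 < s →
      (∫⁻ w in ball z s, ENNReal.ofReal (‖f w‖ ^ (2 : ℝ))) < ⊤) :
    lpN p (fun z => ENNReal.ofReal (ρ z ^ α) * MO2 ρ r f z) < ⊤ ↔
      ∃ c : ℂ → ℂ, Continuous c ∧
        lpN p (fun z => ENNReal.ofReal (ρ z ^ α) *
          avgq ρ 2 r (fun w => f w - c z) z) < ⊤ := by
  have hf : LocallyIntegrable f volume := fun z => ⟨ball z 1, ball_mem_nhds z one_pos,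
    integrableOn_of_lintegral_sq_lt_top measure_ball_lt_top.ne hfm.restrict (hfl z 1 one_pos)⟩
  constructor
  · intro hMO
    have hρc : Continuous ρ := (lipschitzWith_one_of_measure_ball_eq_one
      (fun z _ => measure_ball_pos_of_doubling hne hdbl z) hρ).continuous
    exact ⟨avgC ρ r f, continuous_avgC hr hρc (fun z => (hρ z).1) hf, hMO⟩
  · rintro ⟨c, -, hc⟩
    have hle : ∀ z, ENNReal.ofReal (ρ z ^ α) * MO2 ρ r f z ≤
        2 * (ENNReal.ofReal (ρ z ^ α) * avgq ρ 2 r (fun w => f w - c z) z) := fun z => by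
      rw [mul_left_comm]
      gcongr
      exact MO2_le_two_mul_avgq (mul_pos hr (hρ z).1) (hf.integrableOn_ball _ _) _
    calc lpN p (fun z => ENNReal.ofReal (ρ z ^ α) * MO2 ρ r f z)
        ≤ lpN p (fun z => 2 * (ENNReal.ofReal (ρ z ^ α) * avgq ρ 2 r (fun w => f w - c z) z)) :=
          lpN_mono hp.le hle
      _ = 2 * lpN p (fun z => ENNReal.ofReal (ρ z ^ α) * avgq ρ 2 r (fun w => f w - c z) z) :=
          lpN_const_mul hp ofNat_ne_top _
      _ < ⊤ := mul_lt_top ofNat_lt_top hc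

/-- characterization of `IMO^{p,2,α}_r`. -/
theorem stmt8 (p α r : ℝ) (hp : 0 < p) (hr : 0 < r)
    (φ : ℂ → ℝ) (hφ : ContDiff ℝ (⊤ : ℕ∞) φ) (hsub : ∀ z, 0 ≤ lapl φ z)
    (hne : muOf φ ≠ 0) (C₀ : ℝ≥0∞) (hC₀ : 1 < C₀)
    (hdbl : ∀ (z : ℂ) (s : ℝ), 0 < s → muOf φ (ball z (2 * s)) ≤ C₀ * muOf φ (ball z s))
    (ρ : ℂ → ℝ) (hρ : ∀ z, 0 < ρ z ∧ muOf φ (ball z (ρ z)) = 1)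
    (f : ℂ → ℂ) (hfm : AEStronglyMeasurable f MeasureTheory.volume)
    (hfl : ∀ (z : ℂ) (s : ℝ), 0 < s →
      (∫⁻ w in ball z s, ENNReal.ofReal (‖f w‖ ^ (2 : ℝ))) < ⊤) :
    lpN p (fun z => ENNReal.ofReal (ρ z ^ α) * MO2 ρ r f z) < ⊤ ↔
      ∃ c : ℂ → ℂ, Continuous c ∧
        lpN p (fun z => ENNReal.ofReal (ρ z ^ α) *
          avgq ρ 2 r (fun w => f w - c z) z) < ⊤ :=
  stmt8_general p α r hp hr φ hne C₀ hdbl ρ hρ f hfm hfl
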